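/- arXiv:1703.03280 — 8 statements merged into one kernel-verified Lean document; each statement's English description precedes it below -/
import Mathlib

section
/- Let (λ_k)_{k≥0} be a sequence of positive real numbers and (f_k)_{k≥0} a sequence of nonzero complex numbers with −log|f_k| → +∞ as k → ∞, and suppose h = limsup_{k→∞} (log k)/(−log|f_k|) satisfies 0 ≤ h < 1. Then for every real number x with x/(1−h) < α₀ = liminf_{k→∞} (−log|f_k|)/λ_k (inequality in the extended reals), the series ∑_{k=0}^∞ |f_k| e^{xλ_k} converges; that is, the abscissa of absolute convergence of ∑ f_k e^{zλ_k} is at least (1−h)·α₀. -/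
/-!
Write `a k = -log ‖f k‖`, so that the terms are `exp (x λ_k - a_k)`. Below the liminf,
`x λ_k ≤ θ a_k` eventually for some `θ < 1 - h`, so the terms are at most `exp (-(1 - θ) a_k)`.
Above the limsup, `log k ≤ q a_k` eventually for every `q > h`; taking `h < q < 1 - θ` bounds
the terms by `k ^ (-(1 - θ) / q)`, a convergent `p`-series.
-/

open Filter Real

lemma summable_exp_neg_mul_of_log_le {b : ℕ → ℝ} {q δ : ℝ} (hq : 0 < q) (hqδ : q < δ)
    (hb : ∀ᶠ k : ℕ in atTop, log k ≤ q * b k) : Summable fun k => exp (-(δ * b k)) := by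
  have hp : 1 < δ / q := (one_lt_div hq).2 hqδ
  refine (Real.summable_nat_rpow.2 (neg_lt_neg hp)).of_norm_bounded_eventually_nat ?_
  filter_upwards [hb, eventually_ge_atTop 1] with k hbk hk
  have hk_pos : (0 : ℝ) < k := by exact_mod_cast hk
  have hlog : δ / q * log k ≤ δ * b k := by
    calc δ / q * log k ≤ δ / q * (q * b k) := by gcongr
      _ = δ * b k := by field_simp
  rw [norm_of_nonneg (exp_pos _).le, rpow_def_of_pos hk_pos]
  exact exp_le_exp.2 (by linarith)

lemma eventually_le_mul_of_limsup_div_lt {ι : Type*} {L : Filter ι} {u v : ι → ℝ} {q : ℝ}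
    (hv : ∀ᶠ k in L, 0 < v k) (hlt : limsup (fun k => ((u k / v k : ℝ) : EReal)) L < q) :
    ∀ᶠ k in L, u k ≤ q * v k := by
  filter_upwards [eventually_lt_of_limsup_lt hlt, hv] with k hk hvk
  rw [EReal.coe_lt_coe_iff, div_lt_iff₀ hvk] at hk
  exact hk.le

lemma exists_lt_eventually_mul_le_of_lt_liminf {ι : Type*} {L : Filter ι} {a l : ι → ℝ}
    {x s : ℝ} (hl : ∀ᶠ k in L, 0 < l k) (hs : 0 < s)
    (hx : ((x / s : ℝ) : EReal) < liminf (fun k => ((a k / l k : ℝ) : EReal)) L) :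
    ∃ θ < s, ∀ᶠ k in L, x * l k ≤ θ * a k := by
  rcases le_or_gt x 0 with hx0 | hx0
  · refine ⟨0, hs, ?_⟩
    filter_upwards [hl] with k hlk
    simpa using mul_nonpos_of_nonpos_of_nonneg hx0 hlk.le
  · obtain ⟨c, hxc, hc⟩ := EReal.exists_between_coe_real hx
    rw [EReal.coe_lt_coe_iff, div_lt_iff₀ hs] at hxc
    have hc_pos : 0 < c := pos_of_mul_pos_left (hx0.trans hxc) hs.le
    refine ⟨x / c, (div_lt_iff₀ hc_pos).2 (by linarith), ?_⟩
    filter_upwards [eventually_lt_of_lt_liminf hc, hl] with k hk hlk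
    rw [EReal.coe_lt_coe_iff, lt_div_iff₀ hlk] at hk
    calc x * l k = x / c * (c * l k) := by field_simp
      _ ≤ x / c * a k := by gcongr

theorem stmt_5_general (l : ℕ → ℝ) (hl : ∀ k, 0 < l k)
    (f : ℕ → ℂ)
    (hf0 : Filter.Tendsto (fun k => -Real.log (‖f k‖)) Filter.atTop Filter.atTop)
    (h : ℝ)
    (hh : Filter.limsup
        (fun k : ℕ => ((Real.log k / (-Real.log (‖f k‖)) : ℝ) : EReal))
        Filter.atTop = (h : EReal))
    (hh0 : 0 ≤ h) (hh1 : h < 1)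
    (x : ℝ)
    (hx : ((x / (1 - h) : ℝ) : EReal)
      < Filter.liminf
          (fun k => ((-Real.log (‖f k‖) / l k : ℝ) : EReal)) Filter.atTop) :
    Summable (fun k => ‖f k‖ * Real.exp (x * l k)) := by
  obtain ⟨θ, hθ, hxθ⟩ :=
    exists_lt_eventually_mul_le_of_lt_liminf (.of_forall hl) (sub_pos.2 hh1) hx
  obtain ⟨q, hhq, hqθ⟩ := exists_between (lt_sub_comm.1 hθ)
  have hlog : ∀ᶠ k : ℕ in atTop, log k ≤ q * -log ‖f k‖ :=
    eventually_le_mul_of_limsup_div_lt (hf0.eventually_gt_atTop 0)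
      (hh ▸ EReal.coe_lt_coe_iff.2 hhq)
  refine (summable_exp_neg_mul_of_log_le (hh0.trans_lt hhq) hqθ hlog)
    |>.of_norm_bounded_eventually_nat ?_
  filter_upwards [hxθ] with k hk
  calc ‖‖f k‖ * exp (x * l k)‖ = ‖f k‖ * exp (x * l k) := norm_of_nonneg (by positivity)
    _ ≤ exp (log ‖f k‖) * exp (x * l k) := by gcongr; exact le_exp_log _
    _ = exp (x * l k - -log ‖f k‖) := by rw [← exp_add]; ring_nf
    _ ≤ exp (-((1 - θ) * -log ‖f k‖)) := by gcongr; linarith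

/-- If `−log|f_k| → +∞` and `h = limsup (log k)/(−log|f_k|)` satisfies `0 ≤ h < 1`, then the
Dirichlet series converges absolutely at every real `x` with `x/(1−h) < α₀`; i.e. the abscissa
of absolute convergence is at least `(1−h)·α₀`. -/
theorem stmt_5 (l : ℕ → ℝ) (hl : ∀ k, 0 < l k)
    (f : ℕ → ℂ) (hf : ∀ k, f k ≠ 0)
    (hf0 : Filter.Tendsto (fun k => -Real.log (‖f k‖)) Filter.atTop Filter.atTop)
    (h : ℝ)
    (hh : Filter.limsup
        (fun k : ℕ => ((Real.log k / (-Real.log (‖f k‖)) : ℝ) : EReal))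
        Filter.atTop = (h : EReal))
    (hh0 : 0 ≤ h) (hh1 : h < 1)
    (x : ℝ)
    (hx : ((x / (1 - h) : ℝ) : EReal)
      < Filter.liminf
          (fun k => ((-Real.log (‖f k‖) / l k : ℝ) : EReal)) Filter.atTop) :
    Summable (fun k => ‖f k‖ * Real.exp (x * l k)) :=
  stmt_5_general l hl f hf0 h hh hh0 hh1 x hx
end

section
/- Let (Ω, 𝒜, P) be a probability space, (λ_k)_{k≥0} a sequence of positive real-valued random variables, (Z_k)_{k≥0} a sequence of complex-valued random variables, and (a_k)_{k≥0} a sequence of nonzero complex numbers. Assume that almost surely: limsup_{k→∞} (log k)/λ_k(ω) < +∞, liminf_{k→∞} (−log|Z_k(ω)|)/λ_k(ω) > −∞, and liminf_{k→∞} (−log|a_k|)/λ_k(ω) = +∞. Then almost surely, for every real x the series ∑_{k=0}^∞ |a_k Z_k(ω)| e^{xλ_k(ω)} converges; that is, the abscissa of absolute convergence of ∑ a_k Z_k(ω) e^{zλ_k(ω)} equals +∞ almost surely. -/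
open Filter Real

/-!
Fix `ω`. Choose `τ` above the limsup of `log k / λ_k` and `c` below the liminf of
`-log |Z_k| / λ_k`; since the liminf for `a_k` is infinite, eventually
`|a_k| ≤ e^{-(x - c + 2τ) λ_k}`. Then eventually
`|a_k Z_k| e^{x λ_k} ≤ e^{-2τ λ_k} ≤ k⁻²`, because `k ≤ e^{τ λ_k}`.
-/

lemma eventually_le_exp_mul_of_limsup_lt {ι : Type*} {f : Filter ι} {r l : ι → ℝ}
    (hl : ∀ i, 0 < l i) {c : ℝ}
    (hc : limsup (fun i => ((log (r i) / l i : ℝ) : EReal)) f < c) :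
    ∀ᶠ i in f, r i ≤ exp (c * l i) := by
  filter_upwards [eventually_lt_of_limsup_lt hc] with i hi
  rcases le_or_gt (r i) 0 with hr | hr
  · exact hr.trans (exp_pos _).le
  · have hlog : log (r i) < c * l i := (div_lt_iff₀ (hl i)).mp (EReal.coe_lt_coe_iff.mp hi)
    calc r i = exp (log (r i)) := (exp_log hr).symm
      _ ≤ exp (c * l i) := exp_le_exp.mpr hlog.le

lemma eventually_le_exp_neg_mul_of_lt_liminf {ι : Type*} {f : Filter ι} {r l : ι → ℝ}
    (hl : ∀ i, 0 < l i) {c : ℝ}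
    (hc : c < liminf (fun i => ((-log (r i) / l i : ℝ) : EReal)) f) :
    ∀ᶠ i in f, r i ≤ exp (-c * l i) := by
  filter_upwards [eventually_lt_of_lt_liminf hc] with i hi
  rcases le_or_gt (r i) 0 with hr | hr
  · exact hr.trans (exp_pos _).le
  · have hlog : c * l i < -log (r i) := (lt_div_iff₀ (hl i)).mp (EReal.coe_lt_coe_iff.mp hi)
    calc r i = exp (log (r i)) := (exp_log hr).symm
      _ ≤ exp (-c * l i) := exp_le_exp.mpr (by linarith)

theorem summable_norm_mul_mul_exp_of_liminf {R : Type*} [SeminormedRing R] {a z : ℕ → R}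
    {l : ℕ → ℝ} (hl : ∀ k, 0 < l k)
    (hlog : limsup (fun k : ℕ => ((log k / l k : ℝ) : EReal)) atTop < ⊤)
    (hz : ⊥ < liminf (fun k => ((-log ‖z k‖ / l k : ℝ) : EReal)) atTop)
    (ha : liminf (fun k => ((-log ‖a k‖ / l k : ℝ) : EReal)) atTop = ⊤) (x : ℝ) :
    Summable (fun k => ‖a k * z k‖ * exp (x * l k)) := by
  obtain ⟨τ, hτ, -⟩ := EReal.exists_between_coe_real hlog
  obtain ⟨c, -, hc⟩ := EReal.exists_between_coe_real hz
  set M := x - c + 2 * τ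
  have hM : (M : EReal) < liminf (fun k => ((-log ‖a k‖ / l k : ℝ) : EReal)) atTop :=
    ha ▸ EReal.coe_lt_top M
  refine Summable.of_norm_bounded_eventually_nat (Real.summable_nat_pow_inv.mpr one_lt_two) ?_
  filter_upwards [eventually_le_exp_mul_of_limsup_lt hl hτ,
    eventually_le_exp_neg_mul_of_lt_liminf hl hc, eventually_le_exp_neg_mul_of_lt_liminf hl hM,
    eventually_ge_atTop 1] with k hk hzk hak hk1
  have hk0 : (0 : ℝ) < k := by exact_mod_cast hk1
  calc ‖‖a k * z k‖ * exp (x * l k)‖ = ‖a k * z k‖ * exp (x * l k) :=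
        norm_of_nonneg (by positivity)
    _ ≤ ‖a k‖ * ‖z k‖ * exp (x * l k) := by gcongr; exact norm_mul_le _ _
    _ ≤ exp (-M * l k) * exp (-c * l k) * exp (x * l k) := by gcongr
    _ = (exp (τ * l k) ^ 2)⁻¹ := by
      rw [← exp_add, ← exp_add, ← exp_nat_mul, ← exp_neg]
      congr 1
      push_cast
      ring
    _ ≤ ((k : ℝ) ^ 2)⁻¹ := by gcongr

theorem stmt_7_general {Ω : Type*} [MeasurableSpace Ω] (P : MeasureTheory.Measure Ω)
    (l : ℕ → Ω → ℝ) (hlpos : ∀ k ω, 0 < l k ω)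
    (Z : ℕ → Ω → ℂ)
    (a : ℕ → ℂ)
    (htau : ∀ᵐ ω ∂P,
      Filter.limsup (fun k : ℕ => ((Real.log k / l k ω : ℝ) : EReal)) Filter.atTop < ⊤)
    (hZ0 : ∀ᵐ ω ∂P,
      ⊥ < Filter.liminf
          (fun k => ((-Real.log (‖Z k ω‖) / l k ω : ℝ) : EReal)) Filter.atTop)
    (ha0 : ∀ᵐ ω ∂P,
      Filter.liminf
          (fun k => ((-Real.log (‖a k‖) / l k ω : ℝ) : EReal)) Filter.atTop = ⊤) :
    ∀ᵐ ω ∂P, ∀ x : ℝ,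
      Summable (fun k => ‖a k * Z k ω‖ * Real.exp (x * l k ω)) := by
  filter_upwards [htau, hZ0, ha0] with ω hτ hZ hA x
  exact summable_norm_mul_mul_exp_of_liminf (hlpos · ω) hτ hZ hA x

/-- Random Dirichlet series `∑ a_k Z_k(ω) e^{zλ_k(ω)}`: if almost surely
`limsup (log k)/λ_k(ω) < +∞`, `liminf (−log|Z_k(ω)|)/λ_k(ω) > −∞` and
`liminf (−log|a_k|)/λ_k(ω) = +∞`, then almost surely the series converges absolutely at
every real `x`; i.e. the abscissa of absolute convergence is `+∞` almost surely. -/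
theorem stmt_7 {Ω : Type*} [MeasurableSpace Ω] (P : MeasureTheory.Measure Ω)
    [MeasureTheory.IsProbabilityMeasure P]
    (l : ℕ → Ω → ℝ) (hlm : ∀ k, Measurable (l k)) (hlpos : ∀ k ω, 0 < l k ω)
    (Z : ℕ → Ω → ℂ) (hZm : ∀ k, Measurable (Z k))
    (a : ℕ → ℂ) (ha : ∀ k, a k ≠ 0)
    (htau : ∀ᵐ ω ∂P,
      Filter.limsup (fun k : ℕ => ((Real.log k / l k ω : ℝ) : EReal)) Filter.atTop < ⊤)
    (hZ0 : ∀ᵐ ω ∂P,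
      ⊥ < Filter.liminf
          (fun k => ((-Real.log (‖Z k ω‖) / l k ω : ℝ) : EReal)) Filter.atTop)
    (ha0 : ∀ᵐ ω ∂P,
      Filter.liminf
          (fun k => ((-Real.log (‖a k‖) / l k ω : ℝ) : EReal)) Filter.atTop = ⊤) :
    ∀ᵐ ω ∂P, ∀ x : ℝ,
      Summable (fun k => ‖a k * Z k ω‖ * Real.exp (x * l k ω)) :=
  stmt_7_general P l hlpos Z a htau hZ0 ha0
end

section
/- Let (Ω, 𝒜, P) be a probability space and (λ_k)_{k≥0} a sequence of pairwise independent positive real-valued random variables, and let (f_k)_{k≥0} be nonzero complex numbers with (log k)/(log|f_k|) → 0 as k → ∞. Let ρ ∈ (0, +∞), and assume that for almost every ω, for every real x < ρ the series ∑_{k=0}^∞ |f_k| e^{xλ_k(ω)} converges (i.e. the abscissa of absolute convergence σ(f,ω) ≥ ρ a.s.). Then for every ε ∈ (0, ρ): ∑_{k=0}^∞ P{ω : λ_k(ω) ≥ (log|f_k|)/(ε − ρ)} < +∞. -/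
/-! If `∑ P(A_k)` diverged, where `A_k = {λ_k ≥ log|f_k| / (ε - ρ)}`, the second Borel–Cantelli
lemma would put almost every `ω` in infinitely many `A_k`. It holds under pairwise independence:
the counts `∑_{k<n} 1_{A_k}` then have variance at most their mean, so Chebyshev's inequality
shows they are unbounded almost surely. On `A_k` the term `|f_k| e^{(ρ - ε) λ_k(ω)}` is at least
`1`, contradicting the convergence of `∑ |f_k| e^{x λ_k(ω)}` at `x = ρ - ε < ρ`. -/

open MeasureTheory ProbabilityTheory Filter Set
open scoped ENNReal Topology

namespace ProbabilityTheory

variable {Ω : Type*} {mΩ : MeasurableSpace Ω} {μ : Measure Ω}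

lemma IndepSet.indepFun_indicator_one {s t : Set Ω} (h : IndepSet s t μ) :
    IndepFun (s.indicator fun _ ↦ (1 : ℝ)) (t.indicator fun _ ↦ (1 : ℝ)) μ := by
  have hs : Measurable[MeasurableSpace.generateFrom {s}] (s.indicator fun _ ↦ (1 : ℝ)) :=
    measurable_const.indicator (MeasurableSpace.measurableSet_generateFrom rfl)
  have ht : Measurable[MeasurableSpace.generateFrom {t}] (t.indicator fun _ ↦ (1 : ℝ)) :=
    measurable_const.indicator (MeasurableSpace.measurableSet_generateFrom rfl)
  exact indep_of_indep_of_le_right (indep_of_indep_of_le_left h hs.comap_le) ht.comap_le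

lemma variance_indicator_one_le [IsProbabilityMeasure μ] {s : Set Ω} (hs : MeasurableSet s) :
    variance (s.indicator fun _ ↦ (1 : ℝ)) μ ≤ μ.real s := by
  have hsq : (s.indicator fun _ ↦ (1 : ℝ)) ^ 2 = s.indicator fun _ ↦ (1 : ℝ) := by
    ext ω; by_cases h : ω ∈ s <;> simp [h]
  rw [variance_eq_sub (memLp_indicator_const 2 hs 1 (Or.inr (measure_ne_top μ s))), hsq,
    integral_indicator_const _ hs]
  simp only [smul_eq_mul, mul_one]
  nlinarith [sq_nonneg (μ.real s)]

lemma measure_le_half_integral_le_of_variance_le [IsFiniteMeasure μ] {X : Ω → ℝ} (hX : MemLp X 2 μ)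
    (hpos : 0 < μ[X]) (hvar : variance X μ ≤ μ[X]) :
    μ {ω | X ω ≤ μ[X] / 2} ≤ ENNReal.ofReal (4 / μ[X]) := by
  calc μ {ω | X ω ≤ μ[X] / 2} ≤ μ {ω | μ[X] / 2 ≤ |X ω - μ[X]|} := by
        refine measure_mono fun ω (hω : X ω ≤ μ[X] / 2) ↦ ?_
        rw [mem_ofPred_eq, abs_sub_comm]
        exact le_abs.2 (Or.inl (by linarith))
    _ ≤ ENNReal.ofReal (variance X μ / (μ[X] / 2) ^ 2) :=
        meas_ge_le_variance_div_sq hX (by positivity)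
    _ ≤ ENNReal.ofReal (4 / μ[X]) := by
        refine ENNReal.ofReal_le_ofReal ?_
        calc variance X μ / (μ[X] / 2) ^ 2 ≤ μ[X] / (μ[X] / 2) ^ 2 := by gcongr
          _ = 4 / μ[X] := by field_simp; ring

theorem ae_tendsto_atTop_of_variance_le_integral [IsFiniteMeasure μ] {S : ℕ → Ω → ℝ}
    (hS : ∀ n, MemLp (S n) 2 μ) (hmono : ∀ ω, Monotone (S · ω))
    (hvar : ∀ n, variance (S n) μ ≤ μ[S n])
    (hmean : Tendsto (fun n ↦ μ[S n]) atTop atTop) :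
    ∀ᵐ ω ∂μ, Tendsto (S · ω) atTop atTop := by
  have hbdd : ∀ M : ℕ, ∀ᵐ ω ∂μ, ∃ n, (M : ℝ) ≤ S n ω := by
    intro M
    rw [ae_iff]
    have hbound : ∀ᶠ n in atTop, μ {ω | ¬∃ m, (M : ℝ) ≤ S m ω} ≤ ENNReal.ofReal (4 / μ[S n]) := by
      filter_upwards [hmean.eventually_ge_atTop (2 * M), hmean.eventually_gt_atTop 0]
        with n hMn hpos
      calc μ {ω | ¬∃ m, (M : ℝ) ≤ S m ω} ≤ μ {ω | S n ω ≤ μ[S n] / 2} := by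
            refine measure_mono fun ω hω ↦ ?_
            push Not at hω
            change S n ω ≤ μ[S n] / 2
            linarith [hω n]
        _ ≤ _ := measure_le_half_integral_le_of_variance_le (hS n) hpos (hvar n)
    have hlim : Tendsto (fun n ↦ ENNReal.ofReal (4 / μ[S n])) atTop (𝓝 0) := by
      simpa using ENNReal.tendsto_ofReal (tendsto_const_nhds.div_atTop hmean)
    exact nonpos_iff_eq_zero.1 (ge_of_tendsto hlim hbound)
  filter_upwards [ae_all_iff.2 hbdd] with ω hω
  refine tendsto_atTop_atTop_of_monotone (hmono ω) fun b ↦ ?_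
  obtain ⟨M, hM⟩ := exists_nat_ge b
  obtain ⟨n, hn⟩ := hω M
  exact ⟨n, hM.trans hn⟩

lemma tendsto_sum_measureReal_atTop {s : ℕ → Set Ω} [IsFiniteMeasure μ]
    (hs : ∑' n, μ (s n) = ∞) :
    Tendsto (fun n ↦ ∑ k ∈ Finset.range n, μ.real (s k)) atTop atTop := by
  refine (not_summable_iff_tendsto_nat_atTop_of_nonneg fun _ ↦ measureReal_nonneg).1 fun h ↦ ?_
  have hreal : ∑' n, μ (s n) = ENNReal.ofReal (∑' n, μ.real (s n)) := by
    rw [ENNReal.ofReal_tsum_of_nonneg (fun _ ↦ measureReal_nonneg) h]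
    exact tsum_congr fun n ↦ (ofReal_measureReal).symm
  exact ENNReal.ofReal_ne_top (hreal ▸ hs)

theorem ae_mem_limsup_of_pairwise_indepSet [IsProbabilityMeasure μ] {s : ℕ → Set Ω}
    (hsm : ∀ n, MeasurableSet (s n)) (hs : Pairwise fun i j ↦ IndepSet (s i) (s j) μ)
    (hs' : ∑' n, μ (s n) = ∞) : ∀ᵐ ω ∂μ, ω ∈ limsup s atTop := by
  set X : ℕ → Ω → ℝ := fun k ↦ (s k).indicator fun _ ↦ 1
  have hX : ∀ k, MemLp (X k) 2 μ :=
    fun k ↦ memLp_indicator_const 2 (hsm k) 1 (Or.inr (measure_ne_top μ _))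
  have hmean : ∀ n, μ[∑ k ∈ Finset.range n, X k] = ∑ k ∈ Finset.range n, μ.real (s k) := by
    intro n
    simp only [Finset.sum_apply]
    rw [integral_finsetSum _ fun k _ ↦ (hX k).integrable one_le_two]
    simp [X, integral_indicator_const _ (hsm _)]
  have hvar : ∀ n, variance (∑ k ∈ Finset.range n, X k) μ ≤ μ[∑ k ∈ Finset.range n, X k] := by
    intro n
    rw [IndepFun.variance_sum (fun k _ ↦ hX k) fun i _ j _ hij ↦ (hs hij).indepFun_indicator_one,
      hmean]
    exact Finset.sum_le_sum fun k _ ↦ variance_indicator_one_le (hsm k)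
  have hmono : ∀ ω, Monotone fun n ↦ (∑ k ∈ Finset.range n, X k) ω := fun ω ↦ by
    simp only [Finset.sum_apply]
    exact (Finset.sum_mono_set_of_nonneg fun k ↦ indicator_nonneg (fun _ _ ↦ zero_le_one) ω).comp
      Finset.range_mono
  have hcount := ae_tendsto_atTop_of_variance_le_integral
    (fun n ↦ memLp_finsetSum' _ fun k _ ↦ hX k) hmono hvar
    (by simpa only [hmean] using tendsto_sum_measureReal_atTop hs')
  rw [limsup_eq_tendsto_sum_indicator_atTop (one_pos (α := ℝ))]
  simpa only [Finset.sum_apply, X, mem_ofPred_eq] using hcount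

end ProbabilityTheory

lemma Real.one_le_mul_exp_of_log_div_le {a d t : ℝ} (ha : 0 < a) (hd : d < 0)
    (h : Real.log a / d ≤ t) : 1 ≤ a * Real.exp (-d * t) := by
  rw [← Real.exp_log ha, ← Real.exp_add]
  exact Real.one_le_exp (by linarith [(div_le_iff_of_neg hd).1 h])

theorem stmt_8_general {Ω : Type*} [MeasurableSpace Ω] (P : MeasureTheory.Measure Ω)
    [MeasureTheory.IsProbabilityMeasure P]
    (l : ℕ → Ω → ℝ) (hlm : ∀ k, Measurable (l k))
    (hindep : Pairwise (fun i j => ProbabilityTheory.IndepFun (l i) (l j) P))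
    (f : ℕ → ℂ) (hf : ∀ k, f k ≠ 0)
    (ρ : ℝ)
    (hconv : ∀ᵐ ω ∂P, ∀ x : ℝ, x < ρ →
      Summable (fun k => ‖f k‖ * Real.exp (x * l k ω))) :
    ∀ ε : ℝ, 0 < ε → ε < ρ →
      (∑' k : ℕ, P {ω | Real.log (‖f k‖) / (ε - ρ) ≤ l k ω}) < ⊤ := by
  intro ε hε hερ
  set A : ℕ → Set Ω := fun k ↦ {ω | Real.log ‖f k‖ / (ε - ρ) ≤ l k ω}
  have hA : ∀ k, MeasurableSet (A k) := fun k ↦ measurableSet_le measurable_const (hlm k)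
  have hAindep : Pairwise fun i j ↦ IndepSet (A i) (A j) P := fun i j hij ↦
    (indepSet_iff_measure_inter_eq_mul (hA i) (hA j) P).2 <|
      (hindep hij).measure_inter_preimage_eq_mul _ _ measurableSet_Ici measurableSet_Ici
  refine lt_top_iff_ne_top.2 fun hdiv ↦ ?_
  obtain ⟨ω, hω, hsum⟩ := ((ae_mem_limsup_of_pairwise_indepSet hA hAindep hdiv).and hconv).exists
  have hlarge : ∃ᶠ k in atTop, 1 ≤ ‖f k‖ * Real.exp ((ρ - ε) * l k ω) :=
    (mem_limsup_iff_frequently_mem.1 hω).mono fun k hk ↦ by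
      simpa using Real.one_le_mul_exp_of_log_div_le (norm_pos_iff.2 (hf k)) (sub_neg.2 hερ) hk
  have hsmall : ∀ᶠ k in atTop, ‖f k‖ * Real.exp ((ρ - ε) * l k ω) < 1 :=
    (hsum (ρ - ε) (by linarith)).tendsto_atTop_zero.eventually (gt_mem_nhds one_pos)
  obtain ⟨k, hge, hlt⟩ := (hlarge.and_eventually hsmall).exists
  exact hlt.not_ge hge

/-- Dirichlet series with pairwise independent random exponents: if the abscissa of absolute
convergence satisfies `σ(f,ω) ≥ ρ > 0` almost surely, then for every `ε ∈ (0, ρ)` the series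
`∑_k P{ω : λ_k(ω) ≥ (log|f_k|)/(ε − ρ)}` converges. -/
theorem stmt_8 {Ω : Type*} [MeasurableSpace Ω] (P : MeasureTheory.Measure Ω)
    [MeasureTheory.IsProbabilityMeasure P]
    (l : ℕ → Ω → ℝ) (hlm : ∀ k, Measurable (l k)) (hlpos : ∀ k ω, 0 < l k ω)
    (hindep : Pairwise (fun i j => ProbabilityTheory.IndepFun (l i) (l j) P))
    (f : ℕ → ℂ) (hf : ∀ k, f k ≠ 0)
    (hcoef : Filter.Tendsto
      (fun k : ℕ => Real.log k / Real.log (‖f k‖)) Filter.atTop (nhds 0))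
    (ρ : ℝ) (hρ : 0 < ρ)
    (hconv : ∀ᵐ ω ∂P, ∀ x : ℝ, x < ρ →
      Summable (fun k => ‖f k‖ * Real.exp (x * l k ω))) :
    ∀ ε : ℝ, 0 < ε → ε < ρ →
      (∑' k : ℕ, P {ω | Real.log (‖f k‖) / (ε - ρ) ≤ l k ω}) < ⊤ :=
  stmt_8_general P l hlm hindep f hf ρ hconv
end

section
/- Let (Ω, 𝒜, P) be a probability space and (λ_k)_{k≥0} a sequence of positive real-valued random variables (no independence assumed), and let (f_k)_{k≥0} be nonzero complex numbers with (log k)/(log|f_k|) → 0 as k → ∞. Let ρ ∈ (0, +∞) and suppose there exists a sequence (ε_k) of positive reals with ε_k → 0 such that ∑_{k=0}^∞ P{ω : λ_k(ω) ≥ (log|f_k|)/(ε_k − ρ)} < +∞. Then for almost every ω, for every real x < ρ the series ∑_{k=0}^∞ |f_k| e^{xλ_k(ω)} converges; that is, the abscissa of absolute convergence satisfies σ(f,ω) ≥ ρ almost surely. -/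
/-!
By Borel–Cantelli, almost surely `λ_k(ω) < log|f_k| / (ε_k - ρ)` for all large `k`; since
`λ_k > 0` this forces `log|f_k| < 0`. For `0 ≤ y < ρ` and `ε_k ≤ (ρ - y)/2` the exponent then
satisfies `log|f_k| + y λ_k ≤ c log|f_k|` with `c = (ρ - y)/(ρ + y) > 0`, and because
`log k = o(log|f_k|)` this is eventually at most `-2 log k`. Hence the terms are eventually
bounded by `k⁻²`.
-/

open Filter Topology MeasureTheory Real

lemma add_mul_le_mul_of_lt_div_sub {a t e y ρ : ℝ} (ht : 0 ≤ t) (hy : 0 ≤ y) (hyρ : y < ρ)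
    (he : e ≤ (ρ - y) / 2) (hlt : t < a / (e - ρ)) :
    a < 0 ∧ a + y * t ≤ (ρ - y) / (ρ + y) * a := by
  have heρ : e - ρ < 0 := by linarith
  set u := a / (e - ρ)
  have ha : a = u * (e - ρ) := (div_mul_cancel₀ a heρ.ne).symm
  have hu : 0 < u := ht.trans_lt hlt
  refine ⟨ha ▸ mul_neg_of_pos_of_neg hu heρ, ?_⟩
  rw [div_mul_eq_mul_div, le_div_iff₀ (by linarith), ha]
  nlinarith [mul_le_mul_of_nonneg_left hlt.le hy, mul_nonneg hy hu.le]

lemma eventually_mul_le_neg_mul_log {a : ℕ → ℝ}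
    (ha : Tendsto (fun k : ℕ => log k / a k) atTop (𝓝 0)) (hneg : ∀ᶠ k in atTop, a k < 0)
    {c : ℝ} (hc : 0 < c) (C : ℝ) : ∀ᶠ k in atTop, c * a k ≤ -C * log k := by
  have hCa : Tendsto (fun k : ℕ => C * (log k / a k)) atTop (𝓝 0) := by
    simpa using ha.const_mul C
  have hsmall := hCa.eventually (eventually_gt_nhds (neg_neg_of_pos hc))
  filter_upwards [hneg, hsmall] with k hk hCk
  have hlog : log k = log k / a k * a k := (div_mul_cancel₀ _ hk.ne).symm
  rw [hlog]
  nlinarith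

lemma summable_exp_of_eventually_le_neg_mul_log {b : ℕ → ℝ} {p : ℝ} (hp : 1 < p)
    (hb : ∀ᶠ k in atTop, b k ≤ -p * log k) : Summable fun k => exp (b k) := by
  refine (summable_nat_rpow.mpr (by linarith : -p < -1)).of_norm_bounded_eventually_nat ?_
  filter_upwards [hb, eventually_gt_atTop 0] with k hk hk0
  rw [norm_of_nonneg (exp_pos _).le, rpow_def_of_pos (Nat.cast_pos.mpr hk0), mul_comm]
  exact exp_le_exp.mpr hk

theorem stmt_11_general {Ω : Type*} [MeasurableSpace Ω] (P : MeasureTheory.Measure Ω)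
    [MeasureTheory.IsProbabilityMeasure P]
    (l : ℕ → Ω → ℝ) (hlpos : ∀ k ω, 0 < l k ω)
    (f : ℕ → ℂ)
    (hcoef : Filter.Tendsto
      (fun k : ℕ => Real.log k / Real.log (‖f k‖)) Filter.atTop (nhds 0))
    (ρ : ℝ) (hρ : 0 < ρ)
    (ε : ℕ → ℝ) (hε0 : Filter.Tendsto ε Filter.atTop (nhds 0))
    (hsum : (∑' k : ℕ, P {ω | Real.log (‖f k‖) / (ε k - ρ) ≤ l k ω}) < ⊤) :
    ∀ᵐ ω ∂P, ∀ x : ℝ, x < ρ →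
      Summable (fun k => ‖f k‖ * Real.exp (x * l k ω)) := by
  filter_upwards [ae_eventually_notMem hsum.ne] with ω hω x hx
  set y := max x 0
  have hyρ : y < ρ := max_lt hx hρ
  have hc : 0 < (ρ - y) / (ρ + y) := div_pos (by linarith) (by positivity)
  have hexp : ∀ᶠ k in atTop, log ‖f k‖ < 0 ∧
      log ‖f k‖ + y * l k ω ≤ (ρ - y) / (ρ + y) * log ‖f k‖ := by
    filter_upwards [hω, hε0.eventually (eventually_le_nhds (by linarith : 0 < (ρ - y) / 2))]
      with k hk hεk
    exact add_mul_le_mul_of_lt_div_sub (hlpos k ω).le (le_max_right x 0) hyρ hεk (not_le.mp hk)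
  have hdecay := eventually_mul_le_neg_mul_log hcoef (hexp.mono fun _ h => h.1) hc 2
  have hsy : Summable fun k => exp (log ‖f k‖ + y * l k ω) :=
    summable_exp_of_eventually_le_neg_mul_log one_lt_two <|
      (hexp.and hdecay).mono fun _ h => h.1.2.trans h.2
  refine hsy.of_nonneg_of_le (fun k => by positivity) fun k => ?_
  calc ‖f k‖ * exp (x * l k ω) ≤ exp (log ‖f k‖) * exp (y * l k ω) := by
        gcongr
        exacts [le_exp_log _, (hlpos k ω).le, le_max_left x 0]
    _ = exp (log ‖f k‖ + y * l k ω) := (exp_add _ _).symm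

/-- Dirichlet series with random exponents (no independence assumed): if `ρ > 0` and there is
a sequence `ε_k → 0` of positive reals with `∑_k P{ω : λ_k(ω) ≥ (log|f_k|)/(ε_k − ρ)} < ∞`,
then almost surely the series converges absolutely at every real `x < ρ`,
i.e. `σ(f,ω) ≥ ρ` a.s. -/
theorem stmt_11 {Ω : Type*} [MeasurableSpace Ω] (P : MeasureTheory.Measure Ω)
    [MeasureTheory.IsProbabilityMeasure P]
    (l : ℕ → Ω → ℝ) (hlm : ∀ k, Measurable (l k)) (hlpos : ∀ k ω, 0 < l k ω)
    (f : ℕ → ℂ) (hf : ∀ k, f k ≠ 0)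
    (hcoef : Filter.Tendsto
      (fun k : ℕ => Real.log k / Real.log (‖f k‖)) Filter.atTop (nhds 0))
    (ρ : ℝ) (hρ : 0 < ρ)
    (ε : ℕ → ℝ) (hεpos : ∀ k, 0 < ε k) (hε0 : Filter.Tendsto ε Filter.atTop (nhds 0))
    (hsum : (∑' k : ℕ, P {ω | Real.log (‖f k‖) / (ε k - ρ) ≤ l k ω}) < ⊤) :
    ∀ᵐ ω ∂P, ∀ x : ℝ, x < ρ →
      Summable (fun k => ‖f k‖ * Real.exp (x * l k ω)) :=
  stmt_11_general P l hlpos f hcoef ρ hρ ε hε0 hsum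
end

section
/- Let (Ω, 𝒜, P) be a probability space and (λ_k)_{k≥0} a sequence of positive real-valued random variables, and let (f_k)_{k≥0} be nonzero complex numbers with f_k → 0 and (log k)/(log|f_k|) → 0 as k → ∞. Let ρ > 0 and suppose there is a positive real-valued random variable b such that P{ω : λ_k(ω) < x} ≥ P{ω : b(ω) < x} for every x ≥ 0 and every k, and such that the expectation E[n_μ(ρ·b)] < +∞, where n_μ(t) = #{k : −log|f_k| ≤ t} is the counting function of the sequence μ_k = −log|f_k|. Then for almost every ω, for every real x < ρ the series ∑_{k=0}^∞ |f_k| e^{xλ_k(ω)} converges; that is, the abscissa of absolute convergence satisfies σ(f,ω) ≥ ρ almost surely. -/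
/-!
Write `μ_k = -log ‖f_k‖`. Tail domination gives `P(ρ λ_k ≥ μ_k) ≤ P(ρ b ≥ μ_k)`, and the sum over
`k` of the right-hand side is `E[n_μ(ρ b)] < ∞`; by Borel–Cantelli, almost surely
`ρ λ_k(ω) < μ_k` for all large `k`. For `x < ρ` this bounds `‖f_k‖ e^{x λ_k(ω)}` by `e^{-ε μ_k}`
for some `ε > 0`, and since `log k = o(μ_k)` that is eventually at most `k⁻²`.
-/

open scoped ENNReal
open Filter MeasureTheory Asymptotics Topology

theorem tendsto_neg_log_norm_atTop {α E : Type*} [NormedAddCommGroup E] {L : Filter α}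
    {f : α → E} (hf : ∀ a, f a ≠ 0) (hf0 : Tendsto f L (𝓝 0)) :
    Tendsto (fun a => -Real.log ‖f a‖) L atTop := by
  have : Tendsto (fun a => ‖f a‖) L (𝓝[>] 0) :=
    tendsto_nhdsWithin_of_tendsto_nhds_of_eventually_within _ (tendsto_norm_zero.comp hf0)
      (.of_forall fun a => norm_pos_iff.2 (hf a))
  exact tendsto_neg_atBot_atTop.comp (Real.tendsto_log_nhdsGT_zero.comp this)

theorem tsum_measure_eq_lintegral_encard {Ω ι : Type*} [MeasurableSpace Ω] [Countable ι]
    (μ : Measure Ω) {s : ι → Set Ω} (hs : ∀ i, MeasurableSet (s i)) :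
    ∑' i, μ (s i) = ∫⁻ ω, ({i | ω ∈ s i}.encard : ℝ≥0∞) ∂μ := by
  simp_rw [← lintegral_indicator_one (hs _)]
  rw [← lintegral_tsum fun i => (measurable_one.indicator (hs i)).aemeasurable]
  refine lintegral_congr fun ω => ?_
  rw [← ENNReal.tsum_set_one, tsum_subtype {i | ω ∈ s i} fun _ => (1 : ℝ≥0∞)]
  rfl

theorem eventually_mul_le_of_isLittleO {α : Type*} {L : Filter α} {a u : α → ℝ}
    (h : a =o[L] u) (hu : ∀ᶠ x in L, 0 ≤ u x) {C : ℝ} (hC : 0 < C) :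
    ∀ᶠ x in L, C * a x ≤ u x := by
  filter_upwards [h.bound (inv_pos.2 hC), hu] with x hx hux
  rw [Real.norm_eq_abs, Real.norm_eq_abs, abs_of_nonneg hux, ← div_eq_inv_mul,
    le_div_iff₀' hC] at hx
  exact (mul_le_mul_of_nonneg_left (le_abs_self _) hC.le).trans hx

theorem summable_exp_neg_mul_of_isLittleO {μ : ℕ → ℝ}
    (hlog : (fun k : ℕ => Real.log k) =o[atTop] μ) (hμ : ∀ᶠ k in atTop, 0 ≤ μ k)
    {ε : ℝ} (hε : 0 < ε) : Summable fun k => Real.exp (-(ε * μ k)) := by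
  refine Summable.of_norm_bounded_eventually_nat (Real.summable_nat_pow_inv.2 one_lt_two) ?_
  filter_upwards [eventually_mul_le_of_isLittleO hlog hμ (div_pos two_pos hε),
    eventually_gt_atTop 0] with k hk hk0
  have hk0 : (0 : ℝ) < k := by exact_mod_cast hk0
  rw [Real.norm_of_nonneg (Real.exp_pos _).le, ← Real.exp_log (pow_pos hk0 2), ← Real.exp_neg,
    Real.exp_le_exp, Real.log_pow, neg_le_neg_iff]
  rw [div_mul_eq_mul_div, div_le_iff₀ hε] at hk
  push_cast; linarith

theorem summable_exp_mul_sub_of_eventually_lt {μ l : ℕ → ℝ}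
    (hlog : (fun k : ℕ => Real.log k) =o[atTop] μ) (hl : ∀ k, 0 ≤ l k) {ρ x : ℝ}
    (hρ : 0 < ρ) (hx : x < ρ) (hev : ∀ᶠ k in atTop, ρ * l k < μ k) :
    Summable fun k => Real.exp (x * l k - μ k) := by
  set m := max x 0
  have hε : 0 < (ρ - m) / ρ := div_pos (sub_pos.2 (max_lt hx hρ)) hρ
  have hμ : ∀ᶠ k in atTop, 0 ≤ μ k := by
    filter_upwards [hev] with k hk
    exact (mul_nonneg hρ.le (hl k)).trans hk.le
  refine Summable.of_norm_bounded_eventually_nat (summable_exp_neg_mul_of_isLittleO hlog hμ hε) ?_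
  filter_upwards [hev] with k hk
  rw [Real.norm_of_nonneg (Real.exp_pos _).le, Real.exp_le_exp]
  have hxl : ρ * (x * l k) ≤ m * μ k := calc
    ρ * (x * l k) ≤ ρ * (m * l k) := by gcongr; exacts [hl k, le_max_left x 0]
    _ = m * (ρ * l k) := by ring
    _ ≤ m * μ k := by gcongr
  rw [div_mul_eq_mul_div, ← neg_div, le_div_iff₀ hρ]
  linarith

theorem prob_le_le_of_prob_lt_le {Ω : Type*} [MeasurableSpace Ω] (P : Measure Ω)
    [IsProbabilityMeasure P] {X Y : Ω → ℝ} (hX : Measurable X) (hY : Measurable Y) {t : ℝ}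
    (h : P {ω | Y ω < t} ≤ P {ω | X ω < t}) : P {ω | t ≤ X ω} ≤ P {ω | t ≤ Y ω} := by
  have hcompl : ∀ Z : Ω → ℝ, {ω | t ≤ Z ω} = {ω | Z ω < t}ᶜ := fun Z => by ext; simp
  rw [hcompl, hcompl, prob_compl_eq_one_sub (measurableSet_lt hX measurable_const),
    prob_compl_eq_one_sub (measurableSet_lt hY measurable_const)]
  exact tsub_le_tsub_left h 1

theorem ae_eventually_lt_of_lintegral_ncard_lt_top {Ω : Type*} [MeasurableSpace Ω]
    (P : Measure Ω) [IsProbabilityMeasure P] {X : ℕ → Ω → ℝ} {Y : Ω → ℝ}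
    (hX : ∀ k, Measurable (X k)) (hY : Measurable Y)
    (hdom : ∀ x : ℝ, 0 ≤ x → ∀ k : ℕ, P {ω | Y ω < x} ≤ P {ω | X k ω < x})
    {t : ℕ → ℝ} (ht : Tendsto t atTop atTop)
    (hint : ∫⁻ ω, ({k | t k ≤ Y ω}.ncard : ℝ≥0∞) ∂P < ∞) :
    ∀ᵐ ω ∂P, ∀ᶠ k in atTop, X k ω < t k := by
  have hfin : ∀ ω, {k | t k ≤ Y ω}.Finite := fun ω => by
    simpa [← Nat.cofinite_eq_atTop] using ht.eventually_gt_atTop (Y ω)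
  have hsum : ∑' k, P {ω | t k ≤ Y ω} < ∞ := by
    rw [tsum_measure_eq_lintegral_encard P fun k => measurableSet_le measurable_const hY]
    simpa only [Set.mem_ofPred_eq, ← (hfin _).cast_ncard_eq, ENat.toENNReal_coe] using hint
  -- `hdom` only speaks about thresholds `x ≥ 0`; truncating `t k` at `0` is harmless since
  -- `t k ≥ 0` for all large `k`.
  have hsum' : ∑' k, P {ω | max (t k) 0 ≤ X k ω} ≠ ∞ := by
    refine ne_top_of_le_ne_top hsum.ne (ENNReal.tsum_le_tsum fun k => ?_)
    calc P {ω | max (t k) 0 ≤ X k ω} ≤ P {ω | max (t k) 0 ≤ Y ω} :=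
          prob_le_le_of_prob_lt_le P (hX k) hY (hdom _ (le_max_right _ _) k)
      _ ≤ P {ω | t k ≤ Y ω} := measure_mono fun ω (hω : _ ≤ Y ω) => (le_max_left _ _).trans hω
  filter_upwards [ae_eventually_notMem hsum'] with ω hω
  filter_upwards [hω, ht.eventually_ge_atTop 0] with k hk htk
  simpa [max_eq_left htk] using hk

theorem stmt_13_general {Ω : Type*} [MeasurableSpace Ω] (P : MeasureTheory.Measure Ω)
    [MeasureTheory.IsProbabilityMeasure P]
    (l : ℕ → Ω → ℝ) (hlm : ∀ k, Measurable (l k)) (hlpos : ∀ k ω, 0 < l k ω)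
    (f : ℕ → ℂ) (hf : ∀ k, f k ≠ 0)
    (hf0 : Filter.Tendsto f Filter.atTop (nhds 0))
    (hcoef : Filter.Tendsto
      (fun k : ℕ => Real.log k / Real.log (‖f k‖)) Filter.atTop (nhds 0))
    (ρ : ℝ) (hρ : 0 < ρ)
    (b : Ω → ℝ) (hbm : Measurable b)
    (hdom : ∀ x : ℝ, 0 ≤ x → ∀ k : ℕ, P {ω | b ω < x} ≤ P {ω | l k ω < x})
    (hexp : (∫⁻ ω, (Set.ncard {k : ℕ | -Real.log (‖f k‖) ≤ ρ * b ω} : ℝ≥0∞) ∂P)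
      < ⊤) :
    ∀ᵐ ω ∂P, ∀ x : ℝ, x < ρ →
      Summable (fun k => ‖f k‖ * Real.exp (x * l k ω)) := by
  have hμ : Tendsto (fun k => -Real.log ‖f k‖) atTop atTop := tendsto_neg_log_norm_atTop hf hf0
  have hlog : (fun k : ℕ => Real.log k) =o[atTop] fun k => -Real.log ‖f k‖ := by
    refine ((isLittleO_iff_tendsto' ?_).2 hcoef).neg_right
    filter_upwards [hμ.eventually_gt_atTop 0] with k hk h0
    simp [h0] at hk
  have hBC := ae_eventually_lt_of_lintegral_ncard_lt_top P hlm hbm hdom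
    (hμ.atTop_div_const hρ) (by simpa only [div_le_iff₀' hρ] using hexp)
  filter_upwards [hBC] with ω hω x hx
  refine (summable_exp_mul_sub_of_eventually_lt hlog (fun k => (hlpos k ω).le) hρ hx ?_).congr
    fun k => ?_
  · filter_upwards [hω] with k hk
    exact (lt_div_iff₀' hρ).1 hk
  · rw [sub_neg_eq_add, Real.exp_add, Real.exp_log (norm_pos_iff.2 (hf k)), mul_comm]

/-- Dirichlet series with random exponents: if `f_k → 0`, `ρ > 0`, there is a positive random
variable `b` with `P{λ_k < x} ≥ P{b < x}` for all `x ≥ 0` and all `k`, and the expectation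
`E[n_μ(ρ·b)]` of the counting function `n_μ(t) = #{k : −log|f_k| ≤ t}` is finite, then almost
surely the series converges absolutely at every real `x < ρ`, i.e. `σ(f,ω) ≥ ρ` a.s. -/
theorem stmt_13 {Ω : Type*} [MeasurableSpace Ω] (P : MeasureTheory.Measure Ω)
    [MeasureTheory.IsProbabilityMeasure P]
    (l : ℕ → Ω → ℝ) (hlm : ∀ k, Measurable (l k)) (hlpos : ∀ k ω, 0 < l k ω)
    (f : ℕ → ℂ) (hf : ∀ k, f k ≠ 0)
    (hf0 : Filter.Tendsto f Filter.atTop (nhds 0))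
    (hcoef : Filter.Tendsto
      (fun k : ℕ => Real.log k / Real.log (‖f k‖)) Filter.atTop (nhds 0))
    (ρ : ℝ) (hρ : 0 < ρ)
    (b : Ω → ℝ) (hbm : Measurable b) (hbpos : ∀ ω, 0 < b ω)
    (hdom : ∀ x : ℝ, 0 ≤ x → ∀ k : ℕ, P {ω | b ω < x} ≤ P {ω | l k ω < x})
    (hexp : (∫⁻ ω, (Set.ncard {k : ℕ | -Real.log (‖f k‖) ≤ ρ * b ω} : ℝ≥0∞) ∂P)
      < ⊤) :
    ∀ᵐ ω ∂P, ∀ x : ℝ, x < ρ →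
      Summable (fun k => ‖f k‖ * Real.exp (x * l k ω)) :=
  stmt_13_general P l hlm hlpos f hf hf0 hcoef ρ hρ b hbm hdom hexp
end

section
/- Let (λ_k)_{k≥0} be a strictly increasing sequence of real numbers with λ_k > 0 for k ≥ 1, λ_k → +∞, and τ(Λ) = limsup_{k→∞} (log k)/λ_k < +∞. Let (Ω, 𝒜, P) be a probability space and (f_k)_{k≥0} complex-valued random variables such that the moduli (|f_k|)_{k≥0} are pairwise independent. Let ρ ∈ ℝ and assume that for almost every ω, for every real x < ρ the series ∑_{k=0}^∞ |f_k(ω)| e^{xλ_k} converges (i.e. the abscissa of absolute convergence σ(f,ω) ≥ ρ a.s.). Then for every ε > 0: ∑_{k=0}^∞ P{ω : |f_k(ω)| ≥ (e^{−ρ} + ε)^{λ_k}} < +∞. -/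
/-! Put `x = -log (e^{-ρ} + ε) < ρ`. Convergence of `∑ |f_k| e^{x λ_k}` forces
`|f_k| < (e^{-ρ} + ε)^{λ_k}` for all large `k`, so almost surely only finitely many of the events
`A_k = {|f_k| ≥ (e^{-ρ} + ε)^{λ_k}}` occur. For pairwise independent events this already gives
`∑ P(A_k) < ∞`: otherwise every tail contains a finite block of total probability
`S ∈ [1/2, 3/2]`, and Bonferroni's inequality `P(⋃ A_k) ≥ S - S²/2 ≥ 3/8` keeps every tail union,
hence `limsup A_k`, away from probability zero. -/

open MeasureTheory ProbabilityTheory Filter Finset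
open scoped ENNReal

section Bonferroni

variable {α ι : Type*} [MeasurableSpace α] {μ : Measure α} [IsFiniteMeasure μ] {s : ι → Set α}

theorem sum_measureReal_sub_le_measureReal_biUnion [DecidableEq ι]
    (hs : ∀ i, MeasurableSet (s i)) (B : Finset ι) :
    ∑ i ∈ B, μ.real (s i) - (∑ i ∈ B, ∑ j ∈ B.erase i, μ.real (s i ∩ s j)) / 2
      ≤ μ.real (⋃ i ∈ B, s i) := by
  induction B using Finset.induction_on with
  | empty => simp
  | @insert a B ha ih =>
    have hpairs : ∑ i ∈ insert a B, ∑ j ∈ (insert a B).erase i, μ.real (s i ∩ s j)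
        = 2 * ∑ j ∈ B, μ.real (s a ∩ s j) + ∑ i ∈ B, ∑ j ∈ B.erase i, μ.real (s i ∩ s j) := by
      have hi : ∀ i ∈ B, ∑ j ∈ (insert a B).erase i, μ.real (s i ∩ s j)
          = μ.real (s a ∩ s i) + ∑ j ∈ B.erase i, μ.real (s i ∩ s j) := by
        intro i hi
        rw [erase_insert_of_ne (ne_of_mem_of_not_mem hi ha).symm,
          sum_insert (fun h => ha (mem_of_mem_erase h)), Set.inter_comm]
      rw [sum_insert ha, erase_insert ha, sum_congr rfl hi, sum_add_distrib]
      ring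
    have hinter : μ.real (s a ∩ ⋃ i ∈ B, s i) ≤ ∑ j ∈ B, μ.real (s a ∩ s j) := by
      rw [Set.inter_iUnion₂]
      exact measureReal_biUnion_finset_le B _
    have hunion := measureReal_union_add_inter (μ := μ) (s := s a)
      (B.measurableSet_biUnion fun i _ => hs i) (measure_ne_top _ _) (measure_ne_top _ _)
    rw [set_biUnion_insert, sum_insert ha, hpairs]
    linarith

theorem sum_measureReal_sub_sq_le_measureReal_biUnion [IsProbabilityMeasure μ]
    (hs : ∀ i, MeasurableSet (s i)) (hind : Pairwise fun i j => IndepSet (s i) (s j) μ)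
    (B : Finset ι) :
    ∑ i ∈ B, μ.real (s i) - (∑ i ∈ B, μ.real (s i)) ^ 2 / 2 ≤ μ.real (⋃ i ∈ B, s i) := by
  classical
  have hpairs : ∑ i ∈ B, ∑ j ∈ B.erase i, μ.real (s i ∩ s j) ≤ (∑ i ∈ B, μ.real (s i)) ^ 2 := by
    rw [sq, sum_mul_sum]
    refine sum_le_sum fun i _ => ?_
    calc ∑ j ∈ B.erase i, μ.real (s i ∩ s j)
        = ∑ j ∈ B.erase i, μ.real (s i) * μ.real (s j) :=
          sum_congr rfl fun j hj => by
            rw [measureReal_def, (hind (ne_of_mem_erase hj).symm).measure_inter_eq_mul,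
              ENNReal.toReal_mul]; rfl
      _ ≤ ∑ j ∈ B, μ.real (s i) * μ.real (s j) :=
          sum_le_sum_of_subset_of_nonneg (erase_subset i B) fun _ _ _ => by positivity
  linarith [sum_measureReal_sub_le_measureReal_biUnion (μ := μ) hs B]

end Bonferroni

theorem exists_sum_Ico_mem_Icc {q : ℕ → ℝ} {a : ℝ} (ha : 0 < a) (hq : ∀ k, q k ≤ 1) (n : ℕ)
    (h : ∃ m, a ≤ ∑ k ∈ Ico n m, q k) : ∃ m, ∑ k ∈ Ico n m, q k ∈ Set.Icc a (a + 1) := by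
  classical
  obtain ⟨m, hm⟩ : ∃ m, Nat.find h = m + 1 ∧ n ≤ m := by
    have hn : n < Nat.find h := by
      by_contra! hle
      have := Nat.find_spec h
      rw [Ico_eq_empty_of_le hle, sum_empty] at this
      linarith
    exact ⟨Nat.find h - 1, by omega, by omega⟩
  refine ⟨Nat.find h, Nat.find_spec h, ?_⟩
  have hbefore : ∑ k ∈ Ico n m, q k < a := not_le.1 (Nat.find_min h (by omega))
  rw [hm.1, sum_Ico_succ_top hm.2]
  linarith [hq m]

section BorelCantelli

variable {Ω : Type*} [MeasurableSpace Ω] {μ : Measure Ω} [IsProbabilityMeasure μ]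
  {s : ℕ → Set Ω}

theorem exists_le_sum_Ico_measureReal_of_tsum_eq_top (hs : ∑' k, μ (s k) = ∞) (n : ℕ) {a : ℝ} :
    ∃ m, a ≤ ∑ k ∈ Ico n m, μ.real (s k) := by
  have hns : ¬ Summable fun k => μ.real (s k) := fun hsum => by
    simpa [ofReal_measureReal, hs] using hsum.tsum_ofReal_ne_top
  have hpartial :=
    (not_summable_iff_tendsto_nat_atTop_of_nonneg fun _ => measureReal_nonneg).1 hns
  have htail : Tendsto (fun m => ∑ k ∈ Ico n m, μ.real (s k)) atTop atTop := by
    refine (tendsto_atTop_add_const_right _ (-∑ k ∈ range n, μ.real (s k)) hpartial).congr' ?_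
    filter_upwards [eventually_ge_atTop n] with m hm
    rw [sum_Ico_eq_sub _ hm, sub_eq_add_neg]
  exact (htail.eventually_ge_atTop a).exists

theorem three_eighths_le_measureReal_iUnion_ge (hsm : ∀ k, MeasurableSet (s k))
    (hind : Pairwise fun i j => IndepSet (s i) (s j) μ) (hs : ∑' k, μ (s k) = ∞) (n : ℕ) :
    3 / 8 ≤ μ.real (⋃ k ≥ n, s k) := by
  obtain ⟨m, hm₁, hm₂⟩ := exists_sum_Ico_mem_Icc (by norm_num : (0 : ℝ) < 1 / 2)
    (fun k => measureReal_le_one) n (exists_le_sum_Ico_measureReal_of_tsum_eq_top hs n)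
  have hbonf := sum_measureReal_sub_sq_le_measureReal_biUnion hsm hind (Ico n m)
  have hsub : (⋃ k ∈ Ico n m, s k) ⊆ ⋃ k ≥ n, s k :=
    Set.biUnion_mono (fun k hk => (mem_Ico.1 hk).1) fun _ _ => subset_rfl
  nlinarith [measureReal_mono hsub (measure_ne_top μ _)]

theorem tsum_measure_ne_top_of_measure_limsup_eq_zero (hsm : ∀ k, MeasurableSet (s k))
    (hind : Pairwise fun i j => IndepSet (s i) (s j) μ) (h : μ (limsup s atTop) = 0) :
    ∑' k, μ (s k) ≠ ∞ := by
  intro hs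
  have htail : ∀ n, ENNReal.ofReal (3 / 8) ≤ μ (⋃ k ≥ n, s k) := fun n => by
    rw [← ofReal_measureReal (measure_ne_top _ _)]
    exact ENNReal.ofReal_le_ofReal (three_eighths_le_measureReal_iUnion_ge hsm hind hs n)
  have hanti : Antitone fun n => ⋃ k ≥ n, s k :=
    fun _ _ hnm => Set.biUnion_mono (fun _ hk => hnm.trans hk) fun _ _ => subset_rfl
  rw [limsup_eq_iInf_iSup_of_nat, Set.iInf_eq_iInter] at h
  simp only [Set.iSup_eq_iUnion] at h
  rw [hanti.measure_iInter
    (fun n => (MeasurableSet.biUnion (Set.to_countable _) fun k _ => hsm k).nullMeasurableSet)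
    ⟨0, measure_ne_top _ _⟩] at h
  have := le_iInf htail
  rw [h, nonpos_iff_eq_zero, ENNReal.ofReal_eq_zero] at this
  norm_num at this

end BorelCantelli

theorem eventually_lt_rpow_of_summable {a l : ℕ → ℝ} {x c : ℝ} (hl : ∀ᶠ k in atTop, 0 ≤ l k)
    (hc : Real.exp (-x) ≤ c) (ha : Summable fun k => a k * Real.exp (x * l k)) :
    ∀ᶠ k in atTop, a k < c ^ l k := by
  have hc₀ : 0 < c := (Real.exp_pos _).trans_le hc
  have hcx : 1 ≤ c * Real.exp x := by
    calc (1 : ℝ) = Real.exp (-x) * Real.exp x := by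
          rw [← Real.exp_add, neg_add_cancel, Real.exp_zero]
      _ ≤ c * Real.exp x := by gcongr
  filter_upwards [ha.tendsto_atTop_zero.eventually_lt_const one_pos, hl] with k hk hlk
  refine lt_of_mul_lt_mul_right ?_ (Real.exp_pos (x * l k)).le
  calc a k * Real.exp (x * l k) < 1 := hk
    _ ≤ (c * Real.exp x) ^ l k := Real.one_le_rpow hcx hlk
    _ = c ^ l k * Real.exp (x * l k) := by
      rw [Real.mul_rpow hc₀.le (Real.exp_pos x).le, ← Real.exp_mul]

theorem stmt_14_general {Ω : Type*} [MeasurableSpace Ω] (P : MeasureTheory.Measure Ω)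
    [MeasureTheory.IsProbabilityMeasure P]
    (l : ℕ → ℝ)
    (hltop : Filter.Tendsto l Filter.atTop Filter.atTop)
    (f : ℕ → Ω → ℂ) (hfm : ∀ k, Measurable (f k))
    (hindep : Pairwise (fun i j =>
      ProbabilityTheory.IndepFun (fun ω => ‖f i ω‖)
        (fun ω => ‖f j ω‖) P))
    (ρ : ℝ)
    (hconv : ∀ᵐ ω ∂P, ∀ x : ℝ, x < ρ →
      Summable (fun k => ‖f k ω‖ * Real.exp (x * l k))) :
    ∀ ε : ℝ, 0 < ε →
      (∑' k : ℕ, P {ω | (Real.exp (-ρ) + ε) ^ (l k) ≤ ‖f k ω‖}) < ⊤ := by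
  intro ε hε
  set c := Real.exp (-ρ) + ε
  set A : ℕ → Set Ω := fun k => {ω | c ^ l k ≤ ‖f k ω‖}
  have hAm : ∀ k, MeasurableSet (A k) := fun k => measurableSet_le measurable_const (hfm k).norm
  have hAind : Pairwise fun i j => IndepSet (A i) (A j) P := fun i j hij =>
    (indepFun_iff_indepSet_preimage (hfm i).norm (hfm j).norm).1 (hindep hij) _ _
      measurableSet_Ici measurableSet_Ici
  have hx : -Real.log c < ρ := by
    rw [neg_lt, Real.lt_log_iff_exp_lt (by positivity)]
    exact lt_add_of_pos_right _ hε
  have hc : Real.exp (-(-Real.log c)) ≤ c := by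
    rw [neg_neg, Real.exp_log (by positivity)]
  have hlimsup : P (limsup A atTop) = 0 := by
    refine measure_mono_null (fun ω hω => ?_) (ae_iff.1 hconv)
    rw [mem_limsup_iff_frequently_mem] at hω
    intro hsum
    exact hω (eventually_lt_rpow_of_summable (hltop.eventually_ge_atTop 0) hc (hsum _ hx)
      |>.mono fun k hk => not_le.2 hk)
  exact lt_top_iff_ne_top.2 (tsum_measure_ne_top_of_measure_limsup_eq_zero hAm hAind hlimsup)

/-- Random Dirichlet series with deterministic increasing exponents and pairwise independent
moduli of coefficients: if `τ(Λ) = limsup (log k)/λ_k < +∞` and the abscissa of absolute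
convergence satisfies `σ(f,ω) ≥ ρ` almost surely, then for every `ε > 0` the series
`∑_k P{ω : |f_k(ω)| ≥ (e^{−ρ} + ε)^{λ_k}}` converges. -/
theorem stmt_14 {Ω : Type*} [MeasurableSpace Ω] (P : MeasureTheory.Measure Ω)
    [MeasureTheory.IsProbabilityMeasure P]
    (l : ℕ → ℝ) (hmono : StrictMono l) (hlpos : ∀ k, 1 ≤ k → 0 < l k)
    (hltop : Filter.Tendsto l Filter.atTop Filter.atTop)
    (htau : Filter.limsup (fun k : ℕ => ((Real.log k / l k : ℝ) : EReal)) Filter.atTop < ⊤)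
    (f : ℕ → Ω → ℂ) (hfm : ∀ k, Measurable (f k))
    (hindep : Pairwise (fun i j =>
      ProbabilityTheory.IndepFun (fun ω => ‖f i ω‖)
        (fun ω => ‖f j ω‖) P))
    (ρ : ℝ)
    (hconv : ∀ᵐ ω ∂P, ∀ x : ℝ, x < ρ →
      Summable (fun k => ‖f k ω‖ * Real.exp (x * l k))) :
    ∀ ε : ℝ, 0 < ε →
      (∑' k : ℕ, P {ω | (Real.exp (-ρ) + ε) ^ (l k) ≤ ‖f k ω‖}) < ⊤ :=
  stmt_14_general P l hltop f hfm hindep ρ hconv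
end

section
/- Let (λ_k)_{k≥0} be a strictly increasing sequence of real numbers with λ_k > 0 for k ≥ 1 and λ_k → +∞. Let (Ω, 𝒜, P) be a probability space and (f_k)_{k≥0} complex-valued random variables such that the moduli (|f_k|)_{k≥0} are pairwise independent. Let ρ ∈ ℝ and suppose there is a sequence (δ_k) of positive reals with liminf_{k→∞} δ_k = e^{−ρ} such that ∑_{k=0}^∞ P{ω : |f_k(ω)| ≥ δ_k^{λ_k}} = +∞. Then for almost every ω, for every real x > ρ the series ∑_{k=0}^∞ |f_k(ω)| e^{xλ_k} diverges; that is, the abscissa of absolute convergence satisfies σ(f,ω) ≤ ρ almost surely. -/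
/-!
The events `Aₖ = {δₖ ^ λₖ ≤ |fₖ|}` are pairwise independent and `∑ P(Aₖ) = ∞`, so almost surely
infinitely many of them occur. This is the second Borel–Cantelli lemma under pairwise
independence: the number `Sₙ` of events among the first `n` that occur has mean `mₙ → ∞` and,
its terms being pairwise uncorrelated indicators, variance at most `mₙ`; Chebyshev then gives
`P(Sₙ ≤ mₙ / 2) ≤ 4 / mₙ → 0`, so `Sₙ` cannot stay bounded.

For `x > ρ` we have `δₖ > e^{-x}` for large `k`, hence on `Aₖ` the term
`|fₖ| e^{xλₖ} ≥ (δₖ eˣ)^{λₖ} ≥ 1` infinitely often, and the series diverges.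
-/

open MeasureTheory ProbabilityTheory Filter Finset
open scoped ENNReal Topology

lemma ProbabilityTheory.IndepFun.indicator_preimage {Ω β γ : Type*} [MeasurableSpace Ω]
    [MeasurableSpace β] [MeasurableSpace γ] {μ : Measure Ω} {X : Ω → β} {Y : Ω → γ}
    (h : IndepFun X Y μ) {A : Set β} {B : Set γ} (hA : MeasurableSet A) (hB : MeasurableSet B) :
    IndepFun ((X ⁻¹' A).indicator (1 : Ω → ℝ)) ((Y ⁻¹' B).indicator (1 : Ω → ℝ)) μ :=
  h.comp (measurable_const.indicator hA) (measurable_const.indicator hB)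

lemma tendsto_sum_range_measureReal_atTop {Ω : Type*} [MeasurableSpace Ω] {μ : Measure Ω}
    [IsFiniteMeasure μ] {s : ℕ → Set Ω} (hs : ∑' k, μ (s k) = ∞) :
    Tendsto (fun n => ∑ k ∈ range n, μ.real (s k)) atTop atTop := by
  refine (not_summable_iff_tendsto_nat_atTop_of_nonneg fun _ => measureReal_nonneg).1 ?_
  intro hsum
  refine ENNReal.ofReal_ne_top (hs ▸ ?_ : ENNReal.ofReal (∑' k, μ.real (s k)) = ∞)
  rw [ENNReal.ofReal_tsum_of_nonneg (fun _ => measureReal_nonneg) hsum]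
  exact tsum_congr fun k => ofReal_measureReal

section PairwiseIndependentEvents

variable {Ω ι : Type*} [MeasurableSpace Ω] {μ : Measure Ω} [IsProbabilityMeasure μ]
  {s : ι → Set Ω}

lemma integral_sum_indicator_one (hs : ∀ i, MeasurableSet (s i)) (t : Finset ι) :
    ∫ ω, (∑ i ∈ t, (s i).indicator (1 : Ω → ℝ)) ω ∂μ = ∑ i ∈ t, μ.real (s i) := by
  simp only [Finset.sum_apply]
  rw [integral_finsetSum _ fun i _ => (integrable_const 1).indicator (hs i)]
  exact Finset.sum_congr rfl fun i _ => integral_indicator_one (hs i)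

lemma variance_sum_indicator_one_le (hs : ∀ i, MeasurableSet (s i))
    (hind : Pairwise fun i j => IndepFun ((s i).indicator (1 : Ω → ℝ))
      ((s j).indicator (1 : Ω → ℝ)) μ)
    (t : Finset ι) :
    variance (∑ i ∈ t, (s i).indicator (1 : Ω → ℝ)) μ ≤ ∑ i ∈ t, μ.real (s i) := by
  have hL2 i : MemLp ((s i).indicator (1 : Ω → ℝ)) 2 μ := (memLp_const 1).indicator (hs i)
  rw [IndepFun.variance_sum (fun i _ => hL2 i) fun i _ j _ hij => hind hij]
  refine Finset.sum_le_sum fun i _ => (variance_le_expectation_sq (hL2 i).1).trans_eq ?_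
  have hsq : (s i).indicator (1 : Ω → ℝ) ^ 2 = (s i).indicator 1 := by
    ext ω
    by_cases hω : ω ∈ s i <;> simp [hω]
  rw [hsq, integral_indicator_one (hs i)]

lemma measure_sum_indicator_one_le_half_le (hs : ∀ i, MeasurableSet (s i))
    (hind : Pairwise fun i j => IndepFun ((s i).indicator (1 : Ω → ℝ))
      ((s j).indicator (1 : Ω → ℝ)) μ)
    {t : Finset ι} (ht : 0 < ∑ i ∈ t, μ.real (s i)) :
    μ {ω | ∑ i ∈ t, (s i).indicator (1 : Ω → ℝ) ω ≤ (∑ i ∈ t, μ.real (s i)) / 2}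
      ≤ ENNReal.ofReal (4 / ∑ i ∈ t, μ.real (s i)) := by
  set m := ∑ i ∈ t, μ.real (s i)
  set S := ∑ i ∈ t, (s i).indicator (1 : Ω → ℝ)
  have hS : ∀ ω, S ω = ∑ i ∈ t, (s i).indicator 1 ω := fun ω => Finset.sum_apply ω t _
  have hES : μ[S] = m := integral_sum_indicator_one hs t
  calc μ {ω | ∑ i ∈ t, (s i).indicator 1 ω ≤ m / 2}
      ≤ μ {ω | m / 2 ≤ |S ω - μ[S]|} := by
        refine measure_mono fun ω (hω : _ ≤ m / 2) => ?_
        change m / 2 ≤ |S ω - μ[S]|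
        rw [hES, hS, abs_sub_comm]
        linarith [le_abs_self (m - ∑ i ∈ t, (s i).indicator (1 : Ω → ℝ) ω)]
    _ ≤ ENNReal.ofReal (variance S μ / (m / 2) ^ 2) :=
        meas_ge_le_variance_div_sq (memLp_finsetSum' _ fun i _ =>
          (memLp_const 1).indicator (hs i)) (half_pos ht)
    _ ≤ ENNReal.ofReal (4 / m) := by
        refine ENNReal.ofReal_le_ofReal ?_
        calc variance S μ / (m / 2) ^ 2 ≤ m / (m / 2) ^ 2 := by
              gcongr
              exact variance_sum_indicator_one_le hs hind t
          _ = 4 / m := by field_simp; ring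

end PairwiseIndependentEvents

lemma sum_range_indicator_one_le_of_forall_ge_notMem {Ω : Type*} {s : ℕ → Set Ω} {ω : Ω}
    {N : ℕ} (hN : ∀ k ≥ N, ω ∉ s k) (n : ℕ) :
    ∑ k ∈ range n, (s k).indicator (1 : Ω → ℝ) ω ≤ N := by
  calc ∑ k ∈ range n, (s k).indicator (1 : Ω → ℝ) ω
      ≤ ∑ k ∈ range n, if k < N then (1 : ℝ) else 0 := by
        refine sum_le_sum fun k _ => ?_
        by_cases hk : k < N
        · by_cases hω : ω ∈ s k <;> simp [hk, hω]
        · simp [hk, hN k (not_lt.1 hk)]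
    _ = #{k ∈ range n | k < N} := sum_boole _ _
    _ ≤ N := by
        exact_mod_cast (card_le_card fun k hk => by simp_all).trans (card_range N).le

section SecondBorelCantelli

variable {Ω : Type*} [MeasurableSpace Ω] {μ : Measure Ω} [IsProbabilityMeasure μ]
  {s : ℕ → Set Ω}

lemma measure_forall_sum_range_indicator_one_le_eq_zero (hs : ∀ k, MeasurableSet (s k))
    (hind : Pairwise fun i j => IndepFun ((s i).indicator (1 : Ω → ℝ))
      ((s j).indicator (1 : Ω → ℝ)) μ)
    (hdiv : ∑' k, μ (s k) = ∞) (C : ℝ) :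
    μ {ω | ∀ n, ∑ k ∈ range n, (s k).indicator (1 : Ω → ℝ) ω ≤ C} = 0 := by
  have hm := tendsto_sum_range_measureReal_atTop hdiv
  have hbound :
      Tendsto (fun n => ENNReal.ofReal (4 / ∑ k ∈ range n, μ.real (s k))) atTop (𝓝 0) := by
    simpa using ENNReal.tendsto_ofReal (tendsto_const_nhds (x := (4 : ℝ)).div_atTop hm)
  refine nonpos_iff_eq_zero.1 (ge_of_tendsto hbound ?_)
  filter_upwards [hm.eventually_ge_atTop (2 * C), hm.eventually_gt_atTop 0] with n hC hpos
  refine (measure_mono fun ω hω => ?_).trans (measure_sum_indicator_one_le_half_le hs hind hpos)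
  exact (hω n).trans (by linarith)

theorem ae_frequently_mem_of_pairwise_indepFun (hs : ∀ k, MeasurableSet (s k))
    (hind : Pairwise fun i j => IndepFun ((s i).indicator (1 : Ω → ℝ))
      ((s j).indicator (1 : Ω → ℝ)) μ)
    (hdiv : ∑' k, μ (s k) = ∞) :
    ∀ᵐ ω ∂μ, ∃ᶠ k in atTop, ω ∈ s k := by
  rw [ae_iff]
  refine measure_mono_null (fun ω hω => ?_) (measure_iUnion_null fun N : ℕ =>
    measure_forall_sum_range_indicator_one_le_eq_zero hs hind hdiv N)
  obtain ⟨N, hN⟩ := eventually_atTop.1 (not_frequently.1 hω)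
  exact Set.mem_iUnion.2 ⟨N, sum_range_indicator_one_le_of_forall_ge_notMem hN⟩

end SecondBorelCantelli

lemma one_le_rpow_mul_exp_mul {δ x l : ℝ} (hδ : Real.exp (-x) < δ) (hl : 0 ≤ l) :
    1 ≤ δ ^ l * Real.exp (x * l) := by
  rw [Real.exp_mul, ← Real.mul_rpow ((Real.exp_pos _).trans hδ).le (Real.exp_pos x).le]
  refine Real.one_le_rpow ?_ hl
  calc 1 = Real.exp (-x) * Real.exp x := by rw [← Real.exp_add, neg_add_cancel, Real.exp_zero]
    _ ≤ δ * Real.exp x := by gcongr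

lemma not_summable_mul_exp_mul_of_frequently_rpow_le {a δ l : ℕ → ℝ} {x : ℝ}
    (ha : ∃ᶠ k in atTop, δ k ^ l k ≤ a k) (hδ : ∀ᶠ k in atTop, Real.exp (-x) < δ k)
    (hl : ∀ᶠ k in atTop, 0 ≤ l k) :
    ¬ Summable fun k => a k * Real.exp (x * l k) := by
  intro hsum
  have hsmall := hsum.tendsto_atTop_zero.eventually (eventually_lt_nhds zero_lt_one)
  obtain ⟨k, hak, hδk, hlk, hk⟩ := (ha.and_eventually (hδ.and (hl.and hsmall))).exists
  have hterm : δ k ^ l k * Real.exp (x * l k) ≤ a k * Real.exp (x * l k) := by gcongr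
  linarith [one_le_rpow_mul_exp_mul hδk hlk]

theorem stmt_15_general {Ω : Type*} [MeasurableSpace Ω] (P : MeasureTheory.Measure Ω)
    [MeasureTheory.IsProbabilityMeasure P]
    (l : ℕ → ℝ)
    (hltop : Filter.Tendsto l Filter.atTop Filter.atTop)
    (f : ℕ → Ω → ℂ) (hfm : ∀ k, Measurable (f k))
    (hindep : Pairwise (fun i j =>
      ProbabilityTheory.IndepFun (fun ω => ‖f i ω‖)
        (fun ω => ‖f j ω‖) P))
    (ρ : ℝ) (δ : ℕ → ℝ)
    (hδlim : Filter.liminf (fun k => ((δ k : ℝ) : EReal)) Filter.atTop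
      = ((Real.exp (-ρ) : ℝ) : EReal))
    (hdiv : (∑' k : ℕ, P {ω | (δ k) ^ (l k) ≤ ‖f k ω‖}) = ⊤) :
    ∀ᵐ ω ∂P, ∀ x : ℝ, ρ < x →
      ¬ Summable (fun k => ‖f k ω‖ * Real.exp (x * l k)) := by
  have hBC := ae_frequently_mem_of_pairwise_indepFun (μ := P)
    (s := fun k => (fun ω => ‖f k ω‖) ⁻¹' Set.Ici (δ k ^ l k))
    (fun k => (hfm k).norm measurableSet_Ici)
    (fun _ _ hij => (hindep hij).indicator_preimage measurableSet_Ici measurableSet_Ici) hdiv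
  filter_upwards [hBC] with ω hω x hx
  have hδ : ∀ᶠ k in atTop, Real.exp (-x) < δ k := by
    refine (eventually_lt_of_lt_liminf ?_).mono fun k hk => EReal.coe_lt_coe_iff.1 hk
    rw [hδlim]
    exact EReal.coe_lt_coe_iff.2 (Real.exp_lt_exp.2 (by linarith))
  exact not_summable_mul_exp_mul_of_frequently_rpow_le hω hδ (hltop.eventually_ge_atTop 0)

/-- Random Dirichlet series with deterministic increasing exponents and pairwise independent
moduli of coefficients: if there is a sequence of positive reals `δ_k` with
`liminf δ_k = e^{−ρ}` and `∑_k P{ω : |f_k(ω)| ≥ δ_k^{λ_k}} = +∞`, then almost surely the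
series diverges absolutely at every real `x > ρ`, i.e. `σ(f,ω) ≤ ρ` a.s. -/
theorem stmt_15 {Ω : Type*} [MeasurableSpace Ω] (P : MeasureTheory.Measure Ω)
    [MeasureTheory.IsProbabilityMeasure P]
    (l : ℕ → ℝ) (hmono : StrictMono l) (hlpos : ∀ k, 1 ≤ k → 0 < l k)
    (hltop : Filter.Tendsto l Filter.atTop Filter.atTop)
    (f : ℕ → Ω → ℂ) (hfm : ∀ k, Measurable (f k))
    (hindep : Pairwise (fun i j =>
      ProbabilityTheory.IndepFun (fun ω => ‖f i ω‖)
        (fun ω => ‖f j ω‖) P))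
    (ρ : ℝ) (δ : ℕ → ℝ) (hδpos : ∀ k, 0 < δ k)
    (hδlim : Filter.liminf (fun k => ((δ k : ℝ) : EReal)) Filter.atTop
      = ((Real.exp (-ρ) : ℝ) : EReal))
    (hdiv : (∑' k : ℕ, P {ω | (δ k) ^ (l k) ≤ ‖f k ω‖}) = ⊤) :
    ∀ᵐ ω ∂P, ∀ x : ℝ, ρ < x →
      ¬ Summable (fun k => ‖f k ω‖ * Real.exp (x * l k)) :=
  stmt_15_general P l hltop f hfm hindep ρ δ hδlim hdiv
end

section
/- Let (Ω, 𝒜, P) be a probability space, (λ_k)_{k≥0} positive real-valued random variables and (f_k)_{k≥0} complex-valued random variables such that for every real x the sequence of real random variables (ω ↦ |f_k(ω)| e^{xλ_k(ω)})_{k≥0} is independent. Then the abscissa of absolute convergence is almost surely constant: there exists s in the extended reals such that for almost every ω, sup{x ∈ ℝ : ∑_{k=0}^∞ |f_k(ω)| e^{xλ_k(ω)} converges} = s (the supremum taken in the extended reals, with sup ∅ = −∞). -/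
/-!
For each fixed `x`, summability of the independent nonnegative series `∑ |f_k| e^{xλ_k}` is a
tail event, so by Kolmogorov's zero-one law it holds almost surely or almost never. Since
`λ_k > 0`, the set of `x` where the series converges is a down-set, so its supremum is already
determined by the rational `x` in it; intersecting the countably many almost sure events for
rational `x` shows that the abscissa is almost surely the supremum of those rationals `q` at which
the series converges with probability one.
-/

open MeasureTheory ProbabilityTheory Filter Set

lemma summable_iff_bddAbove_sum_range_of_nonneg {f : ℕ → ℝ} (hf : ∀ n, 0 ≤ f n) :
    Summable f ↔ BddAbove (range fun n => ∑ i ∈ Finset.range n, f i) := by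
  refine ⟨fun hs => ⟨∑' i, f i, ?_⟩,
    fun ⟨c, hc⟩ => summable_of_sum_range_le hf fun n => hc ⟨n, rfl⟩⟩
  rintro _ ⟨n, rfl⟩
  exact hs.sum_le_tsum _ fun i _ => hf i

lemma measurableSet_setOf_summable_of_nonneg {Ω : Type*} {mΩ : MeasurableSpace Ω}
    {X : ℕ → Ω → ℝ} (hX : ∀ k, Measurable (X k)) (hnn : ∀ k ω, 0 ≤ X k ω) :
    MeasurableSet {ω | Summable fun k => X k ω} := by
  simp_rw [summable_iff_bddAbove_sum_range_of_nonneg fun k => hnn k _]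
  exact measurableSet_bddAbove_range fun n => Finset.measurable_sum _ fun k _ => hX k

lemma ProbabilityTheory.iIndepFun.measure_setOf_summable_eq_zero_or_one {Ω : Type*}
    [MeasurableSpace Ω] {P : Measure Ω} [IsProbabilityMeasure P] {X : ℕ → Ω → ℝ}
    (hX : ∀ k, Measurable (X k)) (hnn : ∀ k ω, 0 ≤ X k ω) (hi : iIndepFun X P) :
    P {ω | Summable fun k => X k ω} = 0 ∨ P {ω | Summable fun k => X k ω} = 1 := by
  refine measure_zero_or_one_of_measurableSet_limsup_atTop (fun k => (hX k).comap_le) hi ?_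
  rw [limsup_eq_iInf_iSup_of_nat, MeasurableSpace.measurableSet_iInf]
  intro n
  have hshift : {ω | Summable fun k => X k ω} = {ω | Summable fun k => X (k + n) ω} := by
    ext ω; exact (summable_nat_add_iff n).symm
  rw [hshift]
  refine measurableSet_setOf_summable_of_nonneg (fun k => ?_) fun k ω => hnn _ ω
  exact (comap_measurable (X (k + n))).mono
    (le_iSup₂_of_le (k + n) (Nat.le_add_left n k) le_rfl) le_rfl

lemma ae_mem_iff_measure_eq_one {Ω : Type*} [MeasurableSpace Ω] {P : Measure Ω}
    [IsProbabilityMeasure P] {A : Set Ω} (hA : MeasurableSet A) (h : P A = 0 ∨ P A = 1) :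
    ∀ᵐ ω ∂P, ω ∈ A ↔ P A = 1 := by
  rcases h with h | h
  · filter_upwards [measure_eq_zero_iff_ae_notMem.1 h] with ω hω
    simp [hω, h]
  · filter_upwards [(prob_compl_eq_zero_iff hA).2 h |> measure_eq_zero_iff_ae_notMem.1] with ω hω
    simp_all

lemma antitone_summable_mul_exp {a l : ℕ → ℝ} (ha : ∀ k, 0 ≤ a k) (hl : ∀ k, 0 ≤ l k) :
    Antitone fun x : ℝ => Summable fun k => a k * Real.exp (x * l k) := by
  intro x y hxy hy
  refine hy.of_nonneg_of_le (fun k => mul_nonneg (ha k) (Real.exp_pos _).le) fun k => ?_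
  exact mul_le_mul_of_nonneg_left
    (Real.exp_le_exp.2 (mul_le_mul_of_nonneg_right hxy (hl k))) (ha k)

lemma EReal.sSup_coe_setOf_eq_sSup_coe_rat {p : ℝ → Prop} (hp : Antitone p) :
    sSup {y : EReal | ∃ x : ℝ, y = x ∧ p x} = sSup {y : EReal | ∃ q : ℚ, y = (q : ℝ) ∧ p q} := by
  refine le_antisymm (sSup_le ?_) (sSup_le_sSup fun y ⟨q, hy, hq⟩ => ⟨q, hy, hq⟩)
  rintro _ ⟨x, rfl, hx⟩
  refine le_of_forall_lt_imp_le_of_dense fun z hz => ?_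
  obtain ⟨q, hzq, hqx⟩ := EReal.exists_rat_btwn_of_lt hz
  exact hzq.le.trans (le_sSup ⟨q, rfl, hp (EReal.coe_lt_coe_iff.1 hqx).le hx⟩)

/-- Zero-one law for the abscissa of absolute convergence of a random Dirichlet series: if for
every real `x` the random variables `ω ↦ |f_k(ω)| e^{xλ_k(ω)}`, `k ≥ 0`, are independent,
then the abscissa of absolute convergence
`σ(f,ω) = sup{x ∈ ℝ : ∑_k |f_k(ω)| e^{xλ_k(ω)} < ∞}` (computed in the extended reals,
`sup ∅ = −∞`) is almost surely equal to a deterministic constant `s ∈ [−∞, +∞]`. -/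
theorem stmt_19 {Ω : Type*} [MeasurableSpace Ω] (P : MeasureTheory.Measure Ω)
    [MeasureTheory.IsProbabilityMeasure P]
    (l : ℕ → Ω → ℝ) (hlm : ∀ k, Measurable (l k)) (hlpos : ∀ k ω, 0 < l k ω)
    (f : ℕ → Ω → ℂ) (hfm : ∀ k, Measurable (f k))
    (hindep : ∀ x : ℝ,
      ProbabilityTheory.iIndepFun
        (fun k ω => ‖f k ω‖ * Real.exp (x * l k ω)) P) :
    ∃ s : EReal, ∀ᵐ ω ∂P,
      sSup {y : EReal | ∃ x : ℝ, y = (x : EReal) ∧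
        Summable (fun k => ‖f k ω‖ * Real.exp (x * l k ω))} = s := by
  set A : ℝ → Set Ω := fun x => {ω | Summable fun k => ‖f k ω‖ * Real.exp (x * l k ω)}
  have hmeas (x : ℝ) (k : ℕ) : Measurable fun ω => ‖f k ω‖ * Real.exp (x * l k ω) := by
    fun_prop
  have hnonneg (x : ℝ) (k : ℕ) (ω : Ω) : 0 ≤ ‖f k ω‖ * Real.exp (x * l k ω) := by positivity
  have hae : ∀ᵐ ω ∂P, ∀ q : ℚ, ω ∈ A q ↔ P (A q) = 1 := ae_all_iff.2 fun q =>
    ae_mem_iff_measure_eq_one (measurableSet_setOf_summable_of_nonneg (hmeas q) (hnonneg q))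
      ((hindep q).measure_setOf_summable_eq_zero_or_one (hmeas q) (hnonneg q))
  refine ⟨sSup {y : EReal | ∃ q : ℚ, y = (q : ℝ) ∧ P (A q) = 1}, ?_⟩
  filter_upwards [hae] with ω hω
  rw [EReal.sSup_coe_setOf_eq_sSup_coe_rat
    (antitone_summable_mul_exp (fun k => norm_nonneg _) fun k => (hlpos k ω).le)]
  simp_rw [← hω]
  rfl
end
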